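/- arXiv:2504.04247 — 7 statements merged into one kernel-verified Lean document; each statement's English description precedes it below -/
import Mathlib

section
/- Let A be a symmetric positive definite d×d real matrix, b ∈ ℝ^d, x the solution of Ax = b, and x_0 ∈ ℝ^d with residual r_0 = b - A x_0. The conjugate gradient search directions, defined by s_1 = r_0 and s_m = r_{m-1} - (s_{m-1}ᵀ A r_{m-1})/(s_{m-1}ᵀ A s_{m-1}) · s_{m-1} (with r_m the residual of the m-th CG iterate), are pairwise A-orthogonal: s_iᵀ A s_j = 0 for i ≠ j. -/
/-!
By induction on `k` one proves simultaneously that `s₁, …, s_k` are pairwise `A`-orthogonal and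
that `r_k` is orthogonal to `s₁, …, s_k`. Since `r_i` lies in the span of `s_i, s_{i+1}`, the second
statement makes `r_k` orthogonal to `r₀, …, r_{k-1}`. As `α_j A s_j = r_{j-1} - r_j` with `α_j ≠ 0`
(otherwise `r_j = 0` and the next direction would vanish), this gives `⟪r_k, s_j⟫_A = 0` for
`j < k`, which is what the recurrence for `s_{k+1}` needs for `A`-orthogonality to the old
directions. The step size `α` is chosen exactly so that the new residual is orthogonal to the new
direction.
-/

open Matrix

theorem Matrix.IsSymm.dotProduct_mulVec_comm {n : Type*} [Fintype n] {A : Matrix n n ℝ}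
    (hA : A.IsSymm) (u v : n → ℝ) : u ⬝ᵥ A *ᵥ v = v ⬝ᵥ A *ᵥ u := by
  rw [dotProduct_mulVec, ← mulVec_transpose, hA.eq, dotProduct_comm]

/-- The recurrences of the conjugate gradient method, indexed so that `s (k + 1)` is the
direction of the step from iterate `k` to iterate `k + 1` and `r k` is the residual of iterate
`k`. -/
structure IsCGSequence {n : Type*} [Fintype n] (A : Matrix n n ℝ) (r s : ℕ → n → ℝ) (α : ℕ → ℝ) :
    Prop where
  dir_one : s 1 = r 0
  dir_succ : ∀ k, 1 ≤ k →
    s (k + 1) = r k - ((s k ⬝ᵥ A *ᵥ r k) / (s k ⬝ᵥ A *ᵥ s k)) • s k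
  step_succ : ∀ k, α (k + 1) = (r k ⬝ᵥ r k) / (s (k + 1) ⬝ᵥ A *ᵥ s (k + 1))
  residual_succ : ∀ k, r (k + 1) = r k - α (k + 1) • A *ᵥ s (k + 1)

namespace IsCGSequence

variable {n : Type*} [Fintype n] {A : Matrix n n ℝ} {r s : ℕ → n → ℝ} {α : ℕ → ℝ}

theorem dotProduct_residual_eq_zero (h : IsCGSequence A r s α) {v : n → ℝ} (i : ℕ)
    (hv : ∀ j, 1 ≤ j → j ≤ i + 1 → v ⬝ᵥ s j = 0) : v ⬝ᵥ r i = 0 := by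
  rcases Nat.eq_zero_or_pos i with rfl | hi
  · rw [← h.dir_one]
    exact hv 1 le_rfl le_rfl
  · have hr : r i = s (i + 1) + ((s i ⬝ᵥ A *ᵥ r i) / (s i ⬝ᵥ A *ᵥ s i)) • s i := by
      rw [h.dir_succ i hi, sub_add_cancel]
    rw [hr, dotProduct_add, dotProduct_smul, hv (i + 1) (by omega) le_rfl, hv i hi (by omega),
      smul_zero, add_zero]

theorem step_ne_zero (h : IsCGSequence A r s α) {j : ℕ}
    (hq : s (j + 1) ⬝ᵥ A *ᵥ s (j + 1) ≠ 0) (hq' : s (j + 2) ⬝ᵥ A *ᵥ s (j + 2) ≠ 0) :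
    α (j + 1) ≠ 0 := by
  intro hα
  have hrj : r j = 0 := by
    rw [h.step_succ, div_eq_zero_iff, or_iff_left hq] at hα
    exact dotProduct_self_eq_zero.mp hα
  have hrj' : r (j + 1) = 0 := by
    rw [h.residual_succ, hrj, hα, zero_smul, sub_zero]
  have hs : s (j + 2) = 0 := by
    rw [h.dir_succ (j + 1) (by omega), hrj', mulVec_zero, dotProduct_zero, zero_div, zero_smul,
      sub_zero]
  exact hq' (by rw [hs, zero_dotProduct])

theorem dotProduct_mulVec_dir_eq_zero (h : IsCGSequence A r s α) {v : n → ℝ} {j : ℕ}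
    (hv : v ⬝ᵥ r j = 0) (hv' : v ⬝ᵥ r (j + 1) = 0) (hα : α (j + 1) ≠ 0) :
    v ⬝ᵥ A *ᵥ s (j + 1) = 0 := by
  have : α (j + 1) • A *ᵥ s (j + 1) = r j - r (j + 1) := by
    rw [h.residual_succ, sub_sub_cancel]
  have hdot := congrArg (v ⬝ᵥ ·) this
  simp only [dotProduct_smul, dotProduct_sub, hv, hv', sub_self, smul_eq_mul] at hdot
  exact (mul_eq_zero.mp hdot).resolve_left hα

theorem residual_dotProduct_dir_succ (h : IsCGSequence A r s α) {k : ℕ}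
    (hrs : ∀ i, 1 ≤ i → i ≤ k → r k ⬝ᵥ s i = 0) : r k ⬝ᵥ s (k + 1) = r k ⬝ᵥ r k := by
  rcases Nat.eq_zero_or_pos k with rfl | hk
  · rw [h.dir_one]
  · rw [h.dir_succ k hk, dotProduct_sub, dotProduct_smul, hrs k hk le_rfl, smul_zero, sub_zero]

theorem residual_succ_dotProduct (h : IsCGSequence A r s α) (hA : A.IsSymm) (k : ℕ)
    (v : n → ℝ) : r (k + 1) ⬝ᵥ v = r k ⬝ᵥ v - α (k + 1) * (s (k + 1) ⬝ᵥ A *ᵥ v) := by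
  rw [h.residual_succ, sub_dotProduct, smul_dotProduct, dotProduct_comm (A *ᵥ _), smul_eq_mul,
    hA.dotProduct_mulVec_comm]

theorem dir_succ_mulVec_dir_eq_zero (h : IsCGSequence A r s α) (hA : A.IsSymm) {k : ℕ}
    (hq : ∀ i, 1 ≤ i → i ≤ k + 1 → s i ⬝ᵥ A *ᵥ s i ≠ 0)
    (hss : ∀ i j, 1 ≤ j → j < i → i ≤ k → s i ⬝ᵥ A *ᵥ s j = 0)
    (hrs : ∀ i, 1 ≤ i → i ≤ k → r k ⬝ᵥ s i = 0) :
    ∀ j, 1 ≤ j → j ≤ k → s (k + 1) ⬝ᵥ A *ᵥ s j = 0 := by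
  intro j hj hjk
  rw [h.dir_succ k (hj.trans hjk), sub_dotProduct, smul_dotProduct, smul_eq_mul]
  rcases hjk.eq_or_lt with rfl | hjk
  · rw [div_mul_cancel₀ _ (hq j hj (by omega)), hA.dotProduct_mulVec_comm, sub_self]
  · obtain ⟨i, rfl⟩ : ∃ i, j = i + 1 := ⟨j - 1, by omega⟩
    have hrr : ∀ l, l < k → r k ⬝ᵥ r l = 0 := fun l hl =>
      h.dotProduct_residual_eq_zero l fun t ht htl => hrs t ht (by omega)
    have hα : α (i + 1) ≠ 0 := h.step_ne_zero (hq _ hj (by omega)) (hq _ (by omega) (by omega))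
    rw [h.dotProduct_mulVec_dir_eq_zero (hrr i (by omega)) (hrr (i + 1) hjk) hα,
      hss k (i + 1) hj hjk le_rfl, mul_zero, sub_self]

theorem orthogonality_invariant (h : IsCGSequence A r s α) (hA : A.IsSymm) {m : ℕ}
    (hq : ∀ i, 1 ≤ i → i ≤ m → s i ⬝ᵥ A *ᵥ s i ≠ 0) :
    ∀ k ≤ m, (∀ i j, 1 ≤ j → j < i → i ≤ k → s i ⬝ᵥ A *ᵥ s j = 0) ∧
      ∀ i, 1 ≤ i → i ≤ k → r k ⬝ᵥ s i = 0 := by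
  intro k hkm
  induction k with
  | zero => exact ⟨fun i j hj hji hi => by omega, fun i hi hik => by omega⟩
  | succ k ih =>
    obtain ⟨hss, hrs⟩ := ih (by omega)
    have hnew := h.dir_succ_mulVec_dir_eq_zero hA (fun i hi hik => hq i hi (by omega)) hss hrs
    refine ⟨fun i j hj hji hi => ?_, fun i hi hik => ?_⟩
    · rcases hi.eq_or_lt with rfl | hi
      · exact hnew j hj (by omega)
      · exact hss i j hj hji (by omega)
    · rw [h.residual_succ_dotProduct hA]
      rcases hik.eq_or_lt with rfl | hik
      · rw [h.residual_dotProduct_dir_succ hrs, h.step_succ, div_mul_cancel₀ _ (hq _ hi hkm),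
          sub_self]
      · rw [hrs i hi (by omega), hnew i hi (by omega), mul_zero, sub_self]

theorem dir_mulVec_dir_eq_zero (h : IsCGSequence A r s α) (hA : A.IsSymm) {m : ℕ}
    (hq : ∀ i, 1 ≤ i → i ≤ m → s i ⬝ᵥ A *ᵥ s i ≠ 0) {i j : ℕ} (hi : 1 ≤ i) (him : i ≤ m)
    (hj : 1 ≤ j) (hjm : j ≤ m) (hij : i ≠ j) : s i ⬝ᵥ A *ᵥ s j = 0 := by
  rcases hij.lt_or_gt with hij | hij
  · rw [hA.dotProduct_mulVec_comm]
    exact (h.orthogonality_invariant hA hq j hjm).1 j i hi hij le_rfl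
  · exact (h.orthogonality_invariant hA hq i him).1 i j hj hij le_rfl

end IsCGSequence

theorem cg_directions_A_orthogonal_general
    (d : ℕ) (A : Matrix (Fin d) (Fin d) ℝ) (hA : A.PosDef)
    (b : Fin d → ℝ)
    (xit r s : ℕ → Fin d → ℝ) (α : ℕ → ℝ) (m : ℕ)
    (hr : ∀ k, r k = b - A.mulVec (xit k))
    (hs1 : s 1 = r 0)
    (hα : ∀ k, 1 ≤ k → α k = (r (k - 1) ⬝ᵥ r (k - 1)) / (s k ⬝ᵥ A.mulVec (s k)))
    (hxit : ∀ k, 1 ≤ k → xit k = xit (k - 1) + α k • s k)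
    (hs : ∀ k, 2 ≤ k → s k = r (k - 1) -
      ((s (k - 1) ⬝ᵥ A.mulVec (r (k - 1))) / (s (k - 1) ⬝ᵥ A.mulVec (s (k - 1)))) • s (k - 1))
    (hnz : ∀ k, 1 ≤ k → k ≤ m → s k ≠ 0) :
    ∀ i j, 1 ≤ i → i ≤ m → 1 ≤ j → j ≤ m → i ≠ j →
      s i ⬝ᵥ A.mulVec (s j) = 0 := by
  have hcg : IsCGSequence A r s α :=
    { dir_one := hs1
      dir_succ := fun k _ => hs (k + 1) (by omega)
      step_succ := fun k => hα (k + 1) (by omega)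
      residual_succ := fun k => by
        rw [hr, hr, hxit (k + 1) (by omega), Nat.add_sub_cancel, mulVec_add, mulVec_smul]
        abel }
  have hq : ∀ k, 1 ≤ k → k ≤ m → s k ⬝ᵥ A *ᵥ s k ≠ 0 := fun k hk hkm => by
    simpa using (hA.dotProduct_mulVec_pos (hnz k hk hkm)).ne'
  exact fun i j hi him hj hjm hij =>
    hcg.dir_mulVec_dir_eq_zero (isHermitian_iff_isSymm.mp hA.isHermitian) hq hi him hj hjm hij

/-- CG search directions are pairwise A-orthogonal. -/
theorem cg_directions_A_orthogonal
    (d : ℕ) (A : Matrix (Fin d) (Fin d) ℝ) (hA : A.PosDef)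
    (b x₀ : Fin d → ℝ) (x : Fin d → ℝ) (hx : A.mulVec x = b)
    (xit r s : ℕ → Fin d → ℝ) (α : ℕ → ℝ) (m : ℕ)
    (hx0 : xit 0 = x₀)
    (hr : ∀ k, r k = b - A.mulVec (xit k))
    (hs1 : s 1 = r 0)
    (hα : ∀ k, 1 ≤ k → α k = (r (k - 1) ⬝ᵥ r (k - 1)) / (s k ⬝ᵥ A.mulVec (s k)))
    (hxit : ∀ k, 1 ≤ k → xit k = xit (k - 1) + α k • s k)
    (hs : ∀ k, 2 ≤ k → s k = r (k - 1) -
      ((s (k - 1) ⬝ᵥ A.mulVec (r (k - 1))) / (s (k - 1) ⬝ᵥ A.mulVec (s (k - 1)))) • s (k - 1))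
    (hnz : ∀ k, 1 ≤ k → k ≤ m → s k ≠ 0) :
    ∀ i j, 1 ≤ i → i ≤ m → 1 ≤ j → j ≤ m → i ≠ j →
      s i ⬝ᵥ A.mulVec (s j) = 0 :=
  cg_directions_A_orthogonal_general d A hA b xit r s α m hr hs1 hα hxit hs hnz
end

section
/- Let A be symmetric positive definite and S_m ∈ ℝ^{d×m} have full column rank with m < d. The matrix Σ_m = A^{-1} - S_m (S_mᵀ A S_m)^{-1} S_mᵀ has rank d − m. -/
/-!
With `B = Sᵀ A S` (positive definite, since `S` is injective) and `C = B⁻¹ Sᵀ A`, we have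
`C S = 1`, so `P = S C` is an (oblique) projection of rank `m`, and
`A⁻¹ - S B⁻¹ Sᵀ = (1 - P) A⁻¹`. Multiplying by the invertible `A⁻¹` preserves rank, and the
complementary projection `1 - P` has rank `d - m`.
-/

open Matrix
open scoped Matrix

namespace Matrix

variable {m n K : Type*} [Fintype m] [Fintype n] [Field K]

theorem rank_add_rank_one_sub_of_isIdempotentElem [DecidableEq m] {P : Matrix m m K}
    (hP : IsIdempotentElem P) : P.rank + (1 - P).rank = Fintype.card m := by
  have hker : LinearMap.ker P.mulVecLin = LinearMap.range (1 - P).mulVecLin := by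
    have := LinearMap.IsIdempotentElem.ker_eq_range_one_sub (hP.map toLinAlgEquiv')
    rwa [← map_one toLinAlgEquiv', ← map_sub] at this
  rw [rank, rank, ← hker, LinearMap.finrank_range_add_finrank_ker,
    Module.finrank_fintype_fun_eq_card]

theorem rank_mul_eq_of_mul_eq_one [DecidableEq n] {M : Matrix m n K} {C : Matrix n m K}
    (h : C * M = 1) : (M * C).rank = Fintype.card n := by
  refine le_antisymm ((rank_mul_le_left M C).trans (rank_le_card_width M)) ?_
  calc Fintype.card n = (C * (M * C) * M).rank := by
        rw [Matrix.mul_assoc, Matrix.mul_assoc, h, Matrix.mul_one, h, rank_one]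
    _ ≤ (C * (M * C)).rank := rank_mul_le_left _ _
    _ ≤ (M * C).rank := rank_mul_le_right _ _

theorem rank_one_sub_mul_of_mul_eq_one [DecidableEq m] [DecidableEq n] {M : Matrix m n K}
    {C : Matrix n m K} (h : C * M = 1) :
    (1 - M * C).rank = Fintype.card m - Fintype.card n := by
  have hP : IsIdempotentElem (M * C) := by
    rw [IsIdempotentElem, Matrix.mul_assoc, ← Matrix.mul_assoc C, h, Matrix.one_mul]
  have := rank_add_rank_one_sub_of_isIdempotentElem hP
  rw [rank_mul_eq_of_mul_eq_one h] at this
  omega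

end Matrix

theorem inverse_prior_posterior_covariance_rank_general
    (d m : ℕ)
    (A : Matrix (Fin d) (Fin d) ℝ) (hA : A.PosDef)
    (S : Matrix (Fin d) (Fin m) ℝ)
    (hS : LinearIndependent ℝ (fun j : Fin m => Sᵀ j)) :
    (A⁻¹ - S * (Sᵀ * A * S)⁻¹ * Sᵀ).rank = d - m := by
  set B := Sᵀ * A * S
  have hB : IsUnit B.det := by
    have hBpos := hA.conjTranspose_mul_mul_same (mulVec_injective_iff.mpr hS)
    rw [conjTranspose_eq_transpose_of_trivial] at hBpos
    exact hBpos.isUnit.map detMonoidHom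
  have hAdet : IsUnit A.det := hA.isUnit.map detMonoidHom
  have hleft : (B⁻¹ * Sᵀ * A) * S = 1 := by
    rw [Matrix.mul_assoc, Matrix.mul_assoc, ← Matrix.mul_assoc Sᵀ, nonsing_inv_mul B hB]
  have hfactor : A⁻¹ - S * B⁻¹ * Sᵀ = (1 - S * (B⁻¹ * Sᵀ * A)) * A⁻¹ := by
    simp only [sub_mul, Matrix.one_mul, Matrix.mul_assoc, mul_nonsing_inv A hAdet, Matrix.mul_one]
  rw [hfactor, rank_mul_eq_left_of_isUnit_det _ _ (isUnit_nonsing_inv_det A hAdet),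
    rank_one_sub_mul_of_mul_eq_one hleft, Fintype.card_fin, Fintype.card_fin]

/-- The inverse-prior BayesCG posterior covariance has rank `d - m`. -/
theorem inverse_prior_posterior_covariance_rank
    (d m : ℕ) (hm : m < d)
    (A : Matrix (Fin d) (Fin d) ℝ) (hA : A.PosDef)
    (S : Matrix (Fin d) (Fin m) ℝ)
    (hS : LinearIndependent ℝ (fun j : Fin m => Sᵀ j)) :
    (A⁻¹ - S * (Sᵀ * A * S)⁻¹ * Sᵀ).rank = d - m :=
  inverse_prior_posterior_covariance_rank_general d m A hA S hS
end

section
/- Let A be symmetric positive definite, S_m ∈ ℝ^{d×m} full column rank, and Σ_m = A^{-1} - S_m (S_mᵀ A S_m)^{-1} S_mᵀ. Then the null space of Σ_m equals A · span(columns of S_m); in particular, for CG directions, the null space of Σ_m equals A K_m(A, r_0). -/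
open Matrix
open scoped Matrix

namespace Matrix

variable {R : Type*} [CommRing R] {n k : Type*} [Fintype n] [DecidableEq n] [Fintype k]
  [DecidableEq k]

/-- `S (B A S)⁻¹ B A` is a projection onto the column space of `S`. -/
theorem ker_mulVecLin_inv_sub_eq_range {A : Matrix n n R} (hA : IsUnit A) (S : Matrix n k R)
    (B : Matrix k n R) (hG : IsUnit (B * A * S)) :
    LinearMap.ker (A⁻¹ - S * (B * A * S)⁻¹ * B).mulVecLin = LinearMap.range (A * S).mulVecLin := by
  have hAdet : IsUnit A.det := (isUnit_iff_isUnit_det A).mp hA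
  have hGdet : IsUnit (B * A * S).det := (isUnit_iff_isUnit_det _).mp hG
  refine le_antisymm (fun x hx => ?_) ?_
  · refine ⟨(B * A * S)⁻¹ *ᵥ B *ᵥ x, ?_⟩
    have hx' : (S * (B * A * S)⁻¹ * B) *ᵥ x = A⁻¹ *ᵥ x := by
      rw [LinearMap.mem_ker, mulVecLin_apply, sub_mulVec, sub_eq_zero] at hx
      exact hx.symm
    calc (A * S).mulVecLin ((B * A * S)⁻¹ *ᵥ B *ᵥ x) = A *ᵥ (S * (B * A * S)⁻¹ * B) *ᵥ x := by
          simp only [mulVecLin_apply, mulVec_mulVec, Matrix.mul_assoc]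
      _ = x := by rw [hx', mulVec_mulVec, mul_nonsing_inv A hAdet, one_mulVec]
  · have hzero : (A⁻¹ - S * (B * A * S)⁻¹ * B) * (A * S) = 0 := by
      rw [Matrix.sub_mul, ← Matrix.mul_assoc, nonsing_inv_mul A hAdet, Matrix.one_mul,
        Matrix.mul_assoc, Matrix.mul_assoc, ← Matrix.mul_assoc B, nonsing_inv_mul _ hGdet,
        Matrix.mul_one, sub_self]
    rw [LinearMap.range_le_ker_iff, ← mulVecLin_mul, hzero, mulVecLin_zero]

end Matrix

theorem Matrix.range_mulVecLin_mul {R : Type*} [CommRing R] {l m n : Type*} [Fintype m]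
    [Fintype n] (A : Matrix l m R) (S : Matrix m n R) :
    LinearMap.range (A * S).mulVecLin = (Submodule.span R (Set.range S.col)).map A.mulVecLin := by
  rw [← range_mulVecLin, ← LinearMap.range_comp, mulVecLin_mul]

/-- The null space of the inverse-prior posterior covariance is
`A · span(columns of S_m)`; in particular, for CG directions (whose span is the
Krylov space), it equals `A K_m(A, r₀)`. -/
theorem inverse_prior_posterior_covariance_nullspace
    (d m : ℕ) (A : Matrix (Fin d) (Fin d) ℝ) (hA : A.PosDef)
    (S : Matrix (Fin d) (Fin m) ℝ)
    (hS : LinearIndependent ℝ (fun j : Fin m => Sᵀ j))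
    (r₀ : Fin d → ℝ)
    (hspan : Submodule.span ℝ (Set.range Sᵀ)
      = Submodule.span ℝ (Set.range fun i : Fin m => (A ^ (i : ℕ)).mulVec r₀)) :
    LinearMap.ker (A⁻¹ - S * (Sᵀ * A * S)⁻¹ * Sᵀ).mulVecLin
      = Submodule.map A.mulVecLin (Submodule.span ℝ (Set.range Sᵀ)) ∧
    LinearMap.ker (A⁻¹ - S * (Sᵀ * A * S)⁻¹ * Sᵀ).mulVecLin
      = Submodule.map A.mulVecLin
          (Submodule.span ℝ (Set.range fun i : Fin m => (A ^ (i : ℕ)).mulVec r₀)) := by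
  have hG : (Sᵀ * A * S).PosDef := by
    simpa only [conjTranspose_eq_transpose_of_trivial] using
      hA.conjTranspose_mul_mul_same (mulVec_injective_iff.mpr hS)
  have hker : LinearMap.ker (A⁻¹ - S * (Sᵀ * A * S)⁻¹ * Sᵀ).mulVecLin
      = Submodule.map A.mulVecLin (Submodule.span ℝ (Set.range Sᵀ)) := by
    rw [ker_mulVecLin_inv_sub_eq_range hA.isUnit S Sᵀ hG.isUnit, range_mulVecLin_mul]
    rfl
  exact ⟨hker, hker.trans (by rw [hspan])⟩
end

section
/- Let v_1, …, v_d be A-orthonormal (v_iᵀ A v_j = δ_{ij}) with A symmetric positive definite, and suppose span(v_1,…,v_m) = span(s_1,…,s_m) where S_m are the first m columns used for conditioning. With prior covariance Σ_0 = V_d Ψ V_dᵀ for diagonal Ψ with positive entries, the posterior covariance after conditioning on S_mᵀ A x = S_mᵀ b equals V̄_m Ψ̄_m V̄_mᵀ, where V̄_m = [v_{m+1}, …, v_d] and Ψ̄_m = diag(ψ_{m+1}, …, ψ_d). -/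
open Matrix
open scoped Matrix

/-!
Conditioning depends only on the column space of `S`: writing `S = V₁ K` with `V₁` the first `m`
columns of `V`, the Gram matrix becomes `Λ = Kᵀ Ψ₁ K`, so `K` is invertible and may be dropped.
In the coordinates given by `V`, where `A`-orthonormality turns `Vᵀ A V` into `1`, conditioning
the diagonal prior `Ψ` on the first `m` coordinates just deletes their contribution `V₁ Ψ₁ V₁ᵀ`.
-/

namespace Matrix

theorem exists_eq_mul_of_span_range_transpose_le {R ι κ κ' : Type*} [CommSemiring R]
    [Fintype κ] {M : Matrix ι κ R} {N : Matrix ι κ' R}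
    (h : Submodule.span R (Set.range Nᵀ) ≤ Submodule.span R (Set.range Mᵀ)) :
    ∃ K : Matrix κ κ' R, N = M * K := by
  have hcol (j : κ') : Nᵀ j ∈ LinearMap.range M.mulVecLin :=
    range_mulVecLin M ▸ h (Submodule.subset_span ⟨j, rfl⟩)
  choose x hx using hcol
  exact ⟨(of x)ᵀ, ext fun i j => (congrFun (hx j) i).symm⟩

theorem mul_diagonal_mul_transpose_eq_add {R ι : Type*} [CommSemiring R] {m n : ℕ}
    (V : Matrix ι (Fin (m + n)) R) (ψ : Fin (m + n) → R) :
    V * diagonal ψ * Vᵀ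
      = V.submatrix id (Fin.castAdd n) * diagonal (fun i => ψ (Fin.castAdd n i))
          * (V.submatrix id (Fin.castAdd n))ᵀ
        + V.submatrix id (Fin.natAdd m) * diagonal (fun i => ψ (Fin.natAdd m i))
          * (V.submatrix id (Fin.natAdd m))ᵀ := by
  ext a b
  simp [mul_apply, diagonal_apply, Fin.sum_univ_add]

section Selection

variable {R ι κ : Type*} [CommSemiring R] [Fintype ι] [DecidableEq ι] {e : κ → ι}

theorem submatrix_id_eq_mul_one_submatrix {l : Type*} (V : Matrix l ι R) (e : κ → ι) :
    V.submatrix id e = V * (1 : Matrix ι ι R).submatrix id e := by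
  simpa using (mul_submatrix_one (Equiv.refl ι) e V).symm

theorem diagonal_mul_one_submatrix [Fintype κ] [DecidableEq κ] (ψ : ι → R) (e : κ → ι) :
    diagonal ψ * (1 : Matrix ι ι R).submatrix id e
      = (1 : Matrix ι ι R).submatrix id e * diagonal (fun k => ψ (e k)) := by
  ext i k
  by_cases h : i = e k <;> simp [one_apply, h]

theorem transpose_one_submatrix_mul_one_submatrix [DecidableEq κ] (he : Function.Injective e) :
    ((1 : Matrix ι ι R).submatrix id e)ᵀ * (1 : Matrix ι ι R).submatrix id e = 1 := by
  rw [transpose_submatrix, transpose_one, ← submatrix_mul _ _ e id e Function.bijective_id,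
    Matrix.mul_one, submatrix_one e he]

theorem transpose_one_submatrix_mul_diagonal_mul_one_submatrix [Fintype κ] [DecidableEq κ]
    (ψ : ι → R) (he : Function.Injective e) :
    ((1 : Matrix ι ι R).submatrix id e)ᵀ * diagonal ψ * (1 : Matrix ι ι R).submatrix id e
      = diagonal (fun k => ψ (e k)) := by
  rw [Matrix.mul_assoc, diagonal_mul_one_submatrix, ← Matrix.mul_assoc,
    transpose_one_submatrix_mul_one_submatrix he, Matrix.one_mul]

end Selection

section Posterior

variable {R ι ι' κ : Type*} [CommRing R] [Fintype ι] [Fintype ι']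

/-- The matrix `Λ` of the paper. -/
def conditioningGram (C A : Matrix ι ι R) (S : Matrix ι κ R) : Matrix κ κ R :=
  Sᵀ * A * C * A * S

/-- The covariance of the prior `𝒩(x₀, C)` conditioned on the observation `Sᵀ A x = Sᵀ b`. -/
noncomputable def posteriorCov [Fintype κ] [DecidableEq κ] (C A : Matrix ι ι R)
    (S : Matrix ι κ R) : Matrix ι ι R :=
  C - C * A * S * (conditioningGram C A S)⁻¹ * Sᵀ * A * C

theorem conditioningGram_mul_right [Fintype κ] (C A : Matrix ι ι R) (S : Matrix ι κ R)
    (K : Matrix κ κ R) :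
    conditioningGram C A (S * K) = Kᵀ * conditioningGram C A S * K := by
  simp only [conditioningGram, transpose_mul, Matrix.mul_assoc]

theorem posteriorCov_mul_right [Fintype κ] [DecidableEq κ] (C A : Matrix ι ι R)
    (S : Matrix ι κ R) {K : Matrix κ κ R} (hK : IsUnit K.det) :
    posteriorCov C A (S * K) = posteriorCov C A S := by
  have hKt : IsUnit Kᵀ.det := by rwa [det_transpose]
  rw [posteriorCov, posteriorCov, conditioningGram_mul_right, Matrix.mul_inv_rev,
    Matrix.mul_inv_rev]
  simp only [transpose_mul, Matrix.mul_assoc, mul_nonsing_inv_cancel_left _ _ hK,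
    nonsing_inv_mul_cancel_left _ _ hKt]

theorem conditioningGram_conj (V : Matrix ι ι' R) (D : Matrix ι' ι' R) (A : Matrix ι ι R)
    (E : Matrix ι' κ R) :
    conditioningGram (V * D * Vᵀ) A (V * E) = conditioningGram D (Vᵀ * A * V) E := by
  simp only [conditioningGram, transpose_mul, Matrix.mul_assoc]

theorem posteriorCov_conj [Fintype κ] [DecidableEq κ] (V : Matrix ι ι' R) (D : Matrix ι' ι' R)
    (A : Matrix ι ι R) (E : Matrix ι' κ R) :
    posteriorCov (V * D * Vᵀ) A (V * E) = V * posteriorCov D (Vᵀ * A * V) E * Vᵀ := by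
  rw [posteriorCov, posteriorCov, conditioningGram_conj]
  simp only [transpose_mul, Matrix.mul_sub, Matrix.sub_mul, Matrix.mul_assoc]

variable [Fintype κ] [DecidableEq κ] [DecidableEq ι'] {e : κ → ι'}

theorem posteriorCov_diagonal_one_submatrix (ψ : ι' → R) (he : Function.Injective e)
    (hψ : IsUnit (diagonal (fun k => ψ (e k))).det) :
    posteriorCov (diagonal ψ) 1 ((1 : Matrix ι' ι' R).submatrix id e)
      = diagonal ψ - (1 : Matrix ι' ι' R).submatrix id e * diagonal (fun k => ψ (e k))
          * ((1 : Matrix ι' ι' R).submatrix id e)ᵀ := by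
  have hDE := diagonal_mul_one_submatrix (R := R) ψ e
  have hED := congrArg transpose hDE
  simp only [transpose_mul, diagonal_transpose] at hED
  simp only [posteriorCov, conditioningGram, Matrix.mul_one]
  rw [transpose_one_submatrix_mul_diagonal_mul_one_submatrix ψ he, hDE,
    Matrix.mul_assoc _ _ (diagonal ψ), hED]
  simp only [Matrix.mul_assoc, mul_nonsing_inv_cancel_left _ _ hψ]

variable {A : Matrix ι ι R} {V : Matrix ι ι' R}

theorem conditioningGram_submatrix (hV : Vᵀ * A * V = 1) (ψ : ι' → R)
    (he : Function.Injective e) :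
    conditioningGram (V * diagonal ψ * Vᵀ) A (V.submatrix id e)
      = diagonal (fun k => ψ (e k)) := by
  rw [submatrix_id_eq_mul_one_submatrix, conditioningGram_conj, hV, conditioningGram,
    Matrix.mul_one, Matrix.mul_one, transpose_one_submatrix_mul_diagonal_mul_one_submatrix ψ he]

theorem posteriorCov_submatrix (hV : Vᵀ * A * V = 1) (ψ : ι' → R) (he : Function.Injective e)
    (hψ : IsUnit (diagonal (fun k => ψ (e k))).det) :
    posteriorCov (V * diagonal ψ * Vᵀ) A (V.submatrix id e)
      = V * diagonal ψ * Vᵀ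
        - V.submatrix id e * diagonal (fun k => ψ (e k)) * (V.submatrix id e)ᵀ := by
  rw [submatrix_id_eq_mul_one_submatrix, posteriorCov_conj, hV,
    posteriorCov_diagonal_one_submatrix ψ he hψ]
  simp only [Matrix.mul_sub, Matrix.sub_mul, transpose_mul, Matrix.mul_assoc]

end Posterior

end Matrix

theorem krylov_prior_posterior_covariance_general
    (m n : ℕ)
    (A V : Matrix (Fin (m + n)) (Fin (m + n)) ℝ)
    (hV : Vᵀ * A * V = 1)
    (ψ : Fin (m + n) → ℝ)
    (S : Matrix (Fin (m + n)) (Fin m) ℝ)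
    (hspan : Submodule.span ℝ (Set.range (V.submatrix id (Fin.castAdd n))ᵀ)
      = Submodule.span ℝ (Set.range Sᵀ))
    (hΛ : IsUnit (Sᵀ * A * (V * Matrix.diagonal ψ * Vᵀ) * A * S).det) :
    V * Matrix.diagonal ψ * Vᵀ
      - (V * Matrix.diagonal ψ * Vᵀ) * A * S
        * (Sᵀ * A * (V * Matrix.diagonal ψ * Vᵀ) * A * S)⁻¹
        * Sᵀ * A * (V * Matrix.diagonal ψ * Vᵀ)
    = V.submatrix id (Fin.natAdd m)
        * Matrix.diagonal (fun i : Fin n => ψ (Fin.natAdd m i))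
        * (V.submatrix id (Fin.natAdd m))ᵀ := by
  obtain ⟨K, rfl⟩ := exists_eq_mul_of_span_range_transpose_le hspan.ge
  change IsUnit (conditioningGram _ A _).det at hΛ
  rw [conditioningGram_mul_right, conditioningGram_submatrix hV ψ (Fin.castAdd_injective m n)]
    at hΛ
  obtain ⟨⟨-, hψ₁⟩, hK⟩ := by simpa only [det_mul, IsUnit.mul_iff] using hΛ
  change posteriorCov _ A _ = _
  rw [posteriorCov_mul_right _ _ _ hK,
    posteriorCov_submatrix hV ψ (Fin.castAdd_injective m n) hψ₁,
    mul_diagonal_mul_transpose_eq_add, add_sub_cancel_left]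

/-- Under the Krylov prior `Σ₀ = V Ψ Vᵀ` with `V` an `A`-orthonormal basis
whose first `m` columns span the same space as the columns of `S`, the posterior
covariance after conditioning on `Sᵀ A x = Sᵀ b` is `V̄ Ψ̄ V̄ᵀ`. -/
theorem krylov_prior_posterior_covariance
    (m n : ℕ)
    (A V : Matrix (Fin (m + n)) (Fin (m + n)) ℝ)
    (hA : A.PosDef) (hV : Vᵀ * A * V = 1)
    (ψ : Fin (m + n) → ℝ) (hψ : ∀ i, 0 < ψ i)
    (S : Matrix (Fin (m + n)) (Fin m) ℝ)
    (hS : LinearIndependent ℝ (fun j : Fin m => Sᵀ j))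
    (hspan : Submodule.span ℝ (Set.range (V.submatrix id (Fin.castAdd n))ᵀ)
      = Submodule.span ℝ (Set.range Sᵀ))
    (hΛ : IsUnit (Sᵀ * A * (V * Matrix.diagonal ψ * Vᵀ) * A * S).det) :
    V * Matrix.diagonal ψ * Vᵀ
      - (V * Matrix.diagonal ψ * Vᵀ) * A * S
        * (Sᵀ * A * (V * Matrix.diagonal ψ * Vᵀ) * A * S)⁻¹
        * Sᵀ * A * (V * Matrix.diagonal ψ * Vᵀ)
    = V.submatrix id (Fin.natAdd m)
        * Matrix.diagonal (fun i : Fin n => ψ (Fin.natAdd m i))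
        * (V.submatrix id (Fin.natAdd m))ᵀ :=
  krylov_prior_posterior_covariance_general m n A V hV ψ S hspan hΛ
end

section
/- Under the Krylov prior with the same hypotheses, the posterior mean satisfies x_m = x_0 + V_m V_mᵀ r_0, where r_0 = b - A x_0 and V_m = [v_1, …, v_m]. -/
open Matrix
open scoped Matrix

/-- Under the Krylov prior, the posterior mean satisfies
`x_m = x₀ + V_m V_mᵀ r₀` with `r₀ = b - A x₀` and `V_m` the first `m` columns of `V`. -/
theorem krylov_prior_posterior_mean
    (m n : ℕ)
    (A V : Matrix (Fin (m + n)) (Fin (m + n)) ℝ)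
    (hA : A.PosDef) (hV : Vᵀ * A * V = 1)
    (ψ : Fin (m + n) → ℝ) (hψ : ∀ i, 0 < ψ i)
    (S : Matrix (Fin (m + n)) (Fin m) ℝ)
    (hS : LinearIndependent ℝ (fun j : Fin m => Sᵀ j))
    (hspan : Submodule.span ℝ (Set.range (V.submatrix id (Fin.castAdd n))ᵀ)
      = Submodule.span ℝ (Set.range Sᵀ))
    (hΛ : IsUnit (Sᵀ * A * (V * Matrix.diagonal ψ * Vᵀ) * A * S).det)
    (b x₀ x : Fin (m + n) → ℝ) (hx : A.mulVec x = b) :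
    x₀ + ((V * Matrix.diagonal ψ * Vᵀ) * A * S
        * (Sᵀ * A * (V * Matrix.diagonal ψ * Vᵀ) * A * S)⁻¹ * Sᵀ).mulVec
        (b - A.mulVec x₀)
    = x₀ + (V.submatrix id (Fin.castAdd n) * (V.submatrix id (Fin.castAdd n))ᵀ).mulVec
        (b - A.mulVec x₀) := by
  set Vm : Matrix (Fin (m + n)) (Fin m) ℝ := V.submatrix id (Fin.castAdd n) with hVm
  set C : Matrix (Fin m) (Fin m) ℝ := Vmᵀ * A * S with hC
  set Dm : Matrix (Fin m) (Fin m) ℝ := Matrix.diagonal (fun i => ψ (Fin.castAdd n i)) with hDm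
  -- VmᵀAVm = 1
  have hVmAVm : Vmᵀ * A * Vm = 1 := by
    have h1 : Vmᵀ * A * Vm = (Vᵀ * A * V).submatrix (Fin.castAdd n) (Fin.castAdd n) := by
      ext i j
      simp [Matrix.mul_apply, hVm]
    rw [h1, hV]
    ext i j
    simp [Matrix.one_apply, Fin.castAdd_inj]
  -- A is symmetric
  have hAsymm : Aᵀ = A := hA.isHermitian.eq
  -- projection fixes columns of Vm span
  have hproj : ∀ w ∈ Submodule.span ℝ (Set.range Vmᵀ),
      (Vm * Vmᵀ * A).mulVec w = w := by
    intro w hw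
    induction hw using Submodule.span_induction with
    | mem y hy =>
      obtain ⟨k, rfl⟩ := hy
      have hcol : (Vm * Vmᵀ * A).mulVec (Vmᵀ k) = fun i => (Vm * Vmᵀ * A * Vm) i k := by
        ext i
        simp [Matrix.mulVec, Matrix.mul_apply, dotProduct, Finset.sum_mul, mul_comm]
      rw [hcol]
      have : Vm * Vmᵀ * A * Vm = Vm := by
        calc Vm * Vmᵀ * A * Vm = Vm * (Vmᵀ * A * Vm) := by
              rw [Matrix.mul_assoc, Matrix.mul_assoc, Matrix.mul_assoc]
          _ = Vm := by rw [hVmAVm, Matrix.mul_one]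
      rw [this]
      rfl
    | zero => simp
    | add y z _ _ hy hz => rw [Matrix.mulVec_add, hy, hz]
    | smul a y _ hy => rw [Matrix.mulVec_smul, hy]
  -- S = Vm * C
  have hSeq : S = Vm * C := by
    have : Vm * C = Vm * Vmᵀ * A * S := by
      rw [hC]; simp only [Matrix.mul_assoc]
    rw [this]
    ext i j
    have hj : Sᵀ j ∈ Submodule.span ℝ (Set.range Vmᵀ) := by
      rw [hspan]
      exact Submodule.subset_span ⟨j, rfl⟩
    have := congrFun (hproj _ hj) i
    simpa [Matrix.mulVec, Matrix.mul_apply, dotProduct] using this.symm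
  -- Ψ A Vm = Vm Dm
  have hPsiAVm : (V * Matrix.diagonal ψ * Vᵀ) * A * Vm = Vm * Dm := by
    have h1 : Vᵀ * A * Vm = (Vᵀ * A * V).submatrix id (Fin.castAdd n) := by
      ext i j
      simp [Matrix.mul_apply, hVm]
    have h2 : (V * Matrix.diagonal ψ * Vᵀ) * A * Vm
        = V * Matrix.diagonal ψ * (Vᵀ * A * Vm) := by
      simp only [Matrix.mul_assoc]
    rw [h2, h1, hV]
    ext i j
    simp [Matrix.mul_apply, Matrix.one_apply, Matrix.diagonal_apply, hVm, hDm,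
      Finset.sum_ite_eq, mul_comm]
  -- Ψ A S = Vm Dm C
  have hPsiAS : (V * Matrix.diagonal ψ * Vᵀ) * A * S = Vm * Dm * C := by
    calc (V * Matrix.diagonal ψ * Vᵀ) * A * S
        = (V * Matrix.diagonal ψ * Vᵀ) * A * Vm * C := by
          rw [Matrix.mul_assoc ((V * Matrix.diagonal ψ * Vᵀ) * A) Vm C, ← hSeq,
            Matrix.mul_assoc]
      _ = Vm * Dm * C := by rw [hPsiAVm]
  -- Sᵀ A Vm = Cᵀ
  have hSAVm : Sᵀ * A * Vm = Cᵀ := by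
    rw [hC]
    rw [Matrix.transpose_mul, Matrix.transpose_mul, hAsymm, Matrix.transpose_transpose,
      Matrix.mul_assoc]
  -- middle matrix
  have hMid : Sᵀ * A * (V * Matrix.diagonal ψ * Vᵀ) * A * S = Cᵀ * Dm * C := by
    calc Sᵀ * A * (V * Matrix.diagonal ψ * Vᵀ) * A * S
        = Sᵀ * A * ((V * Matrix.diagonal ψ * Vᵀ) * A * S) := by
          simp only [Matrix.mul_assoc]
      _ = Sᵀ * A * (Vm * Dm * C) := by rw [hPsiAS]
      _ = Sᵀ * A * Vm * Dm * C := by simp only [Matrix.mul_assoc]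
      _ = Cᵀ * Dm * C := by rw [hSAVm]
  rw [hMid] at hΛ
  -- invertibility
  have hdetprod : (Cᵀ * Dm * C).det = Cᵀ.det * Dm.det * C.det := by
    rw [Matrix.det_mul, Matrix.det_mul]
  rw [hdetprod] at hΛ
  have hCdet : IsUnit C.det := isUnit_of_mul_isUnit_right hΛ
  have hCtdet : IsUnit Cᵀ.det := isUnit_of_mul_isUnit_left (isUnit_of_mul_isUnit_left hΛ)
  have hDmdet : IsUnit Dm.det := isUnit_of_mul_isUnit_right (isUnit_of_mul_isUnit_left hΛ)
  -- final matrix identity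
  have hfinal : (V * Matrix.diagonal ψ * Vᵀ) * A * S
      * (Sᵀ * A * (V * Matrix.diagonal ψ * Vᵀ) * A * S)⁻¹ * Sᵀ = Vm * Vmᵀ := by
    rw [hMid, hPsiAS]
    rw [Matrix.mul_inv_rev, Matrix.mul_inv_rev]
    have hSt : Sᵀ = Cᵀ * Vmᵀ := by rw [hSeq, Matrix.transpose_mul]
    rw [hSt]
    simp only [Matrix.mul_assoc]
    rw [Matrix.nonsing_inv_mul_cancel_left _ _ hCtdet,
      Matrix.mul_nonsing_inv_cancel_left _ _ hCdet,
      Matrix.mul_nonsing_inv_cancel_left _ _ hDmdet]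
  rw [hfinal]
end

section
/- In the deterministic postiteration posterior of Reid et al., the Z-statistic is degenerate: with x - x_m = V̄_m ψ̄_m, Σ_m = V̄_m Ψ̄_m V̄_mᵀ, and Ψ̄_m = diag(ψ_{m+1}², …, ψ_d²) with all ψ_i ≠ 0, one has Z(x) = (x_m - x)ᵀ Σ_m† (x_m - x) = d - m, independent of x. -/
open Matrix
open scoped Matrix

/-!
Since `V̄` has independent columns, `L† V̄ = diag(|ψᵢ|⁻¹)`, so `L† (x_m - x) = -(sign ψᵢ)ᵢ`.
Hence `Z(x) = ‖L† (x_m - x)‖² = ∑ᵢ (sign ψᵢ)² = d - m`, whatever the error vector `ψ̄` is.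
-/

namespace Matrix

variable {m n R : Type*} [Fintype m] [Fintype n]

theorem dotProduct_transpose_mul_self_mulVec [CommSemiring R] (L : Matrix m n R) (v : n → R) :
    v ⬝ᵥ (Lᵀ * L) *ᵥ v = L *ᵥ v ⬝ᵥ L *ᵥ v := by
  rw [← mulVec_mulVec, dotProduct_mulVec, vecMul_transpose]

variable [DecidableEq n] [Field R] [LinearOrder R] [IsStrictOrderedRing R]

theorem isUnit_det_transpose_mul_self {A : Matrix m n R} (hA : Function.Injective A.mulVec) :
    IsUnit (Aᵀ * A).det := by
  have hker : LinearMap.ker (Aᵀ * A).mulVecLin = ⊥ := by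
    rw [ker_mulVecLin_transpose_mul_self, LinearMap.ker_eq_bot]
    exact hA
  rw [← isUnit_iff_isUnit_det, ← mulVec_injective_iff_isUnit]
  exact LinearMap.ker_eq_bot.mp hker

theorem inv_transpose_mul_self_mul_transpose_mul_self {A : Matrix m n R}
    (hA : Function.Injective A.mulVec) : (Aᵀ * A)⁻¹ * Aᵀ * A = 1 := by
  rw [Matrix.mul_assoc, nonsing_inv_mul _ (isUnit_det_transpose_mul_self hA)]

theorem diagonal_inv_abs_mulVec_dotProduct_self {ψ : n → R} (hψ : ∀ i, ψ i ≠ 0) :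
    diagonal (fun i => |ψ i|⁻¹) *ᵥ ψ ⬝ᵥ diagonal (fun i => |ψ i|⁻¹) *ᵥ ψ = Fintype.card n := by
  have hsq (i : n) : |ψ i|⁻¹ * ψ i * (|ψ i|⁻¹ * ψ i) = 1 := by
    have : |ψ i| ≠ 0 := abs_ne_zero.mpr (hψ i)
    field_simp
    exact (sq_abs _).symm
  simp [dotProduct, mulVec_diagonal, hsq]

end Matrix

theorem deterministic_postiteration_z_statistic_degenerate_general
    (d m : ℕ)
    (Vb : Matrix (Fin d) (Fin (d - m)) ℝ)
    (hVb : LinearIndependent ℝ (fun j : Fin (d - m) => Vbᵀ j))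
    (ψ : Fin (d - m) → ℝ) (hψ : ∀ i, ψ i ≠ 0)
    (x xm : Fin d → ℝ)
    (herr : x - xm = Vb.mulVec ψ) :
    (xm - x) ⬝ᵥ
      ((Matrix.diagonal (fun i => |ψ i|⁻¹) * (Vbᵀ * Vb)⁻¹ * Vbᵀ)ᵀ
        * (Matrix.diagonal (fun i => |ψ i|⁻¹) * (Vbᵀ * Vb)⁻¹ * Vbᵀ)).mulVec (xm - x)
    = ((d - m : ℕ) : ℝ) := by
  set D := Matrix.diagonal (fun i => |ψ i|⁻¹)
  have hleft := inv_transpose_mul_self_mul_transpose_mul_self (mulVec_injective_iff.mpr hVb)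
  have hresidual : (D * (Vbᵀ * Vb)⁻¹ * Vbᵀ) *ᵥ (xm - x) = -(D *ᵥ ψ) := by
    rw [← neg_sub, herr, mulVec_neg, mulVec_mulVec, Matrix.mul_assoc D, Matrix.mul_assoc D, hleft,
      Matrix.mul_one]
  rw [dotProduct_transpose_mul_self_mulVec, hresidual, neg_dotProduct_neg,
    diagonal_inv_abs_mulVec_dotProduct_self hψ, Fintype.card_fin]

/-- In the deterministic postiteration posterior, with
`x - x_m = V̄ ψ̄`, `Σ_m = V̄ diag(ψᵢ²) V̄ᵀ` (all `ψᵢ ≠ 0`), and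
`Σ_m† = (L†)ᵀ L†` with `L† = diag(|ψᵢ|⁻¹) (V̄ᵀ V̄)⁻¹ V̄ᵀ`, the Z-statistic is
degenerate: `Z(x) = (x_m - x)ᵀ Σ_m† (x_m - x) = d - m`, independent of `x`. -/
theorem deterministic_postiteration_z_statistic_degenerate
    (d m : ℕ) (hm : m ≤ d)
    (Vb : Matrix (Fin d) (Fin (d - m)) ℝ)
    (hVb : LinearIndependent ℝ (fun j : Fin (d - m) => Vbᵀ j))
    (ψ : Fin (d - m) → ℝ) (hψ : ∀ i, ψ i ≠ 0)
    (x xm : Fin d → ℝ)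
    (herr : x - xm = Vb.mulVec ψ) :
    (xm - x) ⬝ᵥ
      ((Matrix.diagonal (fun i => |ψ i|⁻¹) * (Vbᵀ * Vb)⁻¹ * Vbᵀ)ᵀ
        * (Matrix.diagonal (fun i => |ψ i|⁻¹) * (Vbᵀ * Vb)⁻¹ * Vbᵀ)).mulVec (xm - x)
    = ((d - m : ℕ) : ℝ) :=
  deterministic_postiteration_z_statistic_degenerate_general d m Vb hVb ψ hψ x xm herr
end

section
/- Under the inverse prior posterior covariance Σ_m = A^{-1} - S_m (S_mᵀ A S_m)^{-1} S_mᵀ and any v in the column space of S_m, Σ_m (A v) = 0; conversely, if Σ_m (A v) = 0 then v ∈ col(S_m). Hence A maps col(S_m) bijectively onto ker(Σ_m). -/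
open Matrix

/-!
Writing `M = Sᵀ A S`, the matrix `P = S M⁻¹ Sᵀ A` is the `A`-orthogonal projector onto the
column space of `S`, and `(A⁻¹ - S M⁻¹ Sᵀ) A = 1 - P`. Hence `(A⁻¹ - S M⁻¹ Sᵀ)(A v) = 0` exactly
when `v = P v`, i.e. when `v` lies in the column space of `S`. Since `A` is invertible, it
therefore maps that column space bijectively onto the kernel of `A⁻¹ - S M⁻¹ Sᵀ`.
-/

section ObliqueProjection

variable {n k R : Type*} [Fintype n] [DecidableEq n] [Fintype k] [DecidableEq k] [CommRing R]
  {A : Matrix n n R} (S : Matrix n k R) (T : Matrix k n R)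

theorem inv_sub_mul_inv_mul_mulVec_mulVec (hA : IsUnit A.det) (v : n → R) :
    (A⁻¹ - S * (T * A * S)⁻¹ * T) *ᵥ (A *ᵥ v) = v - S *ᵥ (((T * A * S)⁻¹ * T * A) *ᵥ v) := by
  rw [mulVec_mulVec, Matrix.sub_mul, nonsing_inv_mul A hA, sub_mulVec, one_mulVec, mulVec_mulVec]
  simp only [Matrix.mul_assoc]

theorem inv_sub_mul_inv_mul_mulVec_mulVec_eq_zero_iff (hA : IsUnit A.det)
    (hM : IsUnit (T * A * S).det) (v : n → R) :
    (A⁻¹ - S * (T * A * S)⁻¹ * T) *ᵥ (A *ᵥ v) = 0 ↔ v ∈ LinearMap.range S.mulVecLin := by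
  rw [inv_sub_mul_inv_mul_mulVec_mulVec S T hA, sub_eq_zero]
  constructor
  · intro hv
    exact ⟨_, hv.symm⟩
  · rintro ⟨c, rfl⟩
    have hleft : (T * A * S)⁻¹ * T * A * S = 1 := by
      rw [Matrix.mul_assoc _ T A, Matrix.mul_assoc, nonsing_inv_mul _ hM]
    rw [mulVecLin_apply, mulVec_mulVec c, hleft, one_mulVec]

end ObliqueProjection

/-- For `Σ_m = A⁻¹ - S (Sᵀ A S)⁻¹ Sᵀ`: for every `v` in the column space
of `S`, `Σ_m (A v) = 0`; conversely `Σ_m (A v) = 0` implies `v ∈ col(S)`; hence `A`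
maps `col(S)` bijectively onto `ker(Σ_m)`. -/
theorem A_maps_colspace_bijectively_onto_nullspace
    (d m : ℕ) (A : Matrix (Fin d) (Fin d) ℝ) (hA : A.PosDef)
    (S : Matrix (Fin d) (Fin m) ℝ)
    (hS : LinearIndependent ℝ (fun j : Fin m => Sᵀ j)) :
    (∀ v ∈ Submodule.span ℝ (Set.range Sᵀ),
      (A⁻¹ - S * (Sᵀ * A * S)⁻¹ * Sᵀ).mulVec (A.mulVec v) = 0) ∧
    (∀ v : Fin d → ℝ,
      (A⁻¹ - S * (Sᵀ * A * S)⁻¹ * Sᵀ).mulVec (A.mulVec v) = 0 →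
      v ∈ Submodule.span ℝ (Set.range Sᵀ)) ∧
    Set.BijOn A.mulVec
      (Submodule.span ℝ (Set.range Sᵀ) : Set (Fin d → ℝ))
      ((LinearMap.ker (A⁻¹ - S * (Sᵀ * A * S)⁻¹ * Sᵀ).mulVecLin : Submodule ℝ (Fin d → ℝ)) :
        Set (Fin d → ℝ)) := by
  have hAdet : IsUnit A.det := (isUnit_iff_isUnit_det A).mp hA.isUnit
  have hM : (Sᵀ * A * S).PosDef := by
    simpa only [conjTranspose_eq_transpose_of_trivial] using
      hA.conjTranspose_mul_mul_same (mulVec_injective_iff.mpr hS)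
  have hMdet : IsUnit (Sᵀ * A * S).det := (isUnit_iff_isUnit_det _).mp hM.isUnit
  have key (v : Fin d → ℝ) :
      (A⁻¹ - S * (Sᵀ * A * S)⁻¹ * Sᵀ) *ᵥ (A *ᵥ v) = 0 ↔ v ∈ Submodule.span ℝ (Set.range Sᵀ) := by
    rw [inv_sub_mul_inv_mul_mulVec_mulVec_eq_zero_iff S Sᵀ hAdet hMdet, range_mulVecLin]
    rfl
  have hspan : (Submodule.span ℝ (Set.range Sᵀ) : Set (Fin d → ℝ)) =
      A.mulVec ⁻¹' LinearMap.ker (A⁻¹ - S * (Sᵀ * A * S)⁻¹ * Sᵀ).mulVecLin := by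
    ext v
    exact (key v).symm
  refine ⟨fun v hv => (key v).mpr hv, fun v hv => (key v).mp hv, ?_⟩
  rw [hspan]
  exact Function.Bijective.bijOn_preimage
    ⟨mulVec_injective_iff_isUnit.mpr hA.isUnit, mulVec_surjective_iff_isUnit.mpr hA.isUnit⟩
end
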